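/- Let X be a metric space, let 0 ≤ ν < 1 and δ > 0 with ν/(1−ν) < δ, and let C : ℕ → Set X be a sequence of nonempty bounded sets such that for every n: (i) C (n+1) is contained in the closed (ν·diam (C n))-thickening of C n, and (ii) diam (C (n+1)) ≤ ν·diam (C n). Let K ⊆ X be a set such that Metric.infDist x (C 0) > δ·diam (C 0) for every x ∈ K. Then K is disjoint from C n for every n. (This is the final step of the proof of Lemma 5.14: choosing ν/(1−ν) < δ, the chains of removed components starting at distance > δ·diam(C) from W₁ never reach W₁.) -/
import Mathlib


/-- Final step of the proof of Lemma 5.14: with ν/(1−ν) < δ, a chain of removed components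
starting at distance > δ · diam (C 0) from K never reaches K. -/
theorem chain_avoids_invariant_set {X : Type*} [MetricSpace X]
    (ν δ : ℝ) (hν0 : 0 ≤ ν) (hν1 : ν < 1) (hδ : 0 < δ) (hνδ : ν / (1 - ν) < δ)
    (C : ℕ → Set X)
    (hne : ∀ n, (C n).Nonempty)
    (hbd : ∀ n, Bornology.IsBounded (C n))
    (hthick : ∀ n, C (n + 1) ⊆ Metric.cthickening (ν * Metric.diam (C n)) (C n))
    (hdiam : ∀ n, Metric.diam (C (n + 1)) ≤ ν * Metric.diam (C n))
    (K : Set X)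
    (hK : ∀ x ∈ K, δ * Metric.diam (C 0) < Metric.infDist x (C 0)) :
    ∀ n, Disjoint K (C n) := by
  set d : ℕ → ℝ := fun n => Metric.diam (C n) with hd
  have hsub : 0 < 1 - ν := by linarith
  have hd0 : 0 ≤ d 0 := Metric.diam_nonneg
  -- diam bound
  have hdpow : ∀ n, d n ≤ ν ^ n * d 0 := by
    intro n
    induction n with
    | zero => simp
    | succ n ih =>
      calc d (n + 1) ≤ ν * d n := hdiam n
        _ ≤ ν * (ν ^ n * d 0) := by
            exact mul_le_mul_of_nonneg_left ih hν0
        _ = ν ^ (n + 1) * d 0 := by ring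
  -- key induction on infDist lower bound
  have key : ∀ n, ∀ x ∈ K,
      δ * d 0 - ν / (1 - ν) * (1 - ν ^ n) * d 0 < Metric.infDist x (C n) := by
    intro n
    induction n with
    | zero => intro x hx; simpa using hK x hx
    | succ n ih =>
      intro x hx
      have hdn : 0 ≤ d n := Metric.diam_nonneg
      -- infDist x (C (n+1)) ≥ infDist x (C n) - ν * d n
      have step : Metric.infDist x (C n) - ν * d n ≤ Metric.infDist x (C (n + 1)) := by
        by_contra hcon
        push_neg at hcon
        obtain ⟨y, hy, hylt⟩ := (Metric.infDist_lt_iff (hne (n + 1))).mp hcon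
        have hy' := hthick n hy
        have hyle : Metric.infDist y (C n) ≤ ν * d n := by
          rw [Metric.mem_cthickening_iff] at hy'
          have h2 := ENNReal.toReal_mono ENNReal.ofReal_ne_top hy'
          rw [ENNReal.toReal_ofReal (by positivity)] at h2
          simpa [Metric.infDist] using h2
        have tri : Metric.infDist x (C n) ≤ Metric.infDist y (C n) + dist x y :=
          Metric.infDist_le_infDist_add_dist
        linarith
      have hpow : 0 ≤ ν ^ n := pow_nonneg hν0 n
      have coeff : ν / (1 - ν) * (1 - ν ^ n) * d 0 + ν * (ν ^ n * d 0)
          ≤ ν / (1 - ν) * (1 - ν ^ (n + 1)) * d 0 := by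
        have : ν / (1 - ν) * (1 - ν ^ n) + ν * ν ^ n
            = ν / (1 - ν) * (1 - ν ^ (n + 1)) := by
          field_simp
          ring
        nlinarith [this]
      have hbound : ν * d n ≤ ν * (ν ^ n * d 0) :=
        mul_le_mul_of_nonneg_left (hdpow n) hν0
      have := ih x hx
      linarith
  intro n
  rw [Set.disjoint_left]
  intro x hx hxC
  have h1 := key n x hx
  have h2 : Metric.infDist x (C n) = 0 := by
    rw [Metric.infDist_zero_of_mem hxC]
  rw [h2] at h1
  have hpow : 0 ≤ ν ^ n := pow_nonneg hν0 n
  have hpow1 : ν ^ n ≤ 1 := pow_le_one₀ hν0 hν1.le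
  have hcoef : ν / (1 - ν) * (1 - ν ^ n) ≤ ν / (1 - ν) := by
    have h0 : 0 ≤ ν / (1 - ν) := div_nonneg hν0 hsub.le
    nlinarith
  nlinarith [mul_le_mul_of_nonneg_right hcoef hd0, mul_le_mul_of_nonneg_right hνδ.le hd0]
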